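/- arXiv:1702.02408 — 2 statements merged into one kernel-verified Lean document; each statement's English description precedes it below -/
import Mathlib

section
/- Let x ∈ W_af and let m₀ ≥ 0 be such that ℓ(x t_{−2mρ∨}) = −ℓ∞(x t_{−2mρ∨}) for all m ≥ m₀ (such m₀ exists). Then for every m ≥ 0, ℓ(x t_{−2(m₀+m)ρ∨}) = ℓ(x t_{−2m₀ρ∨}) + m · ℓ(t_{−2ρ∨}), and ℓ(t_{−2mρ∨}) = m · ℓ(t_{−2ρ∨}). -/
open scoped Classical

/-- The data of a finite crystallographic root system (simple roots `α`, simple coroots `αv`,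
positive roots `Δpos`, Weyl group `W` acting on the root/weight lattice `P` and on the
coroot lattice `Qv`, highest root `θ`), from which the affine Weyl group
`W_af = W ⋉ Q∨` and its Iwahori–Matsumoto length function are constructed below. -/
structure AffineRootSetup where
  /-- index set of the simple roots -/
  I : Type
  [fintypeI : Fintype I]
  /-- the lattice containing the roots (root/weight lattice) -/
  P : Type
  [acgP : AddCommGroup P]
  /-- the coroot lattice `Q∨` -/
  Qv : Type
  [acgQv : AddCommGroup Qv]
  /-- the pairing `⟨·,·⟩ : P × Q∨ → ℤ` -/
  pair : P →+ Qv →+ ℤ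
  /-- simple roots -/
  α : I → P
  /-- simple coroots -/
  αv : I → Qv
  pair_simple : ∀ i, pair (α i) (αv i) = 2
  /-- the finite Weyl group -/
  W : Type
  [groupW : Group W]
  [fintypeW : Fintype W]
  /-- action of `W` on the root lattice -/
  σP : W →* Multiplicative (AddAut P)
  /-- action of `W` on the coroot lattice -/
  σQv : W →* Multiplicative (AddAut Qv)
  pair_invariant : ∀ (w : W) (β : P) (ξ : Qv), pair (σP w β) (σQv w ξ) = pair β ξ
  /-- simple reflections -/
  s : I → W
  s_act : ∀ (i : I) (β : P), σP (s i) β = β - pair β (αv i) • α i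
  s_act_v : ∀ (i : I) (ξ : Qv), σQv (s i) ξ = ξ - pair (α i) ξ • αv i
  sgen : Subgroup.closure (Set.range s) = ⊤
  /-- the set of positive roots -/
  Δpos : Finset P
  simple_mem : ∀ i, α i ∈ Δpos
  pos_decomp : ∀ β ∈ Δpos, β ∈ AddSubmonoid.closure (Set.range α)
  neg_not_pos : ∀ β ∈ Δpos, -β ∉ Δpos
  root_stable : ∀ (w : W), ∀ β ∈ Δpos, σP w β ∈ Δpos ∨ -(σP w β) ∈ Δpos
  /-- the coroot `β∨` of a root `β` -/
  coroot : P → Qv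
  coroot_simple : ∀ i, coroot (α i) = αv i
  coroot_equivariant : ∀ (w : W) (β : P), coroot (σP w β) = σQv w (coroot β)
  coroot_neg : ∀ β : P, coroot (-β) = -coroot β
  /-- the highest root -/
  θ : P
  θ_mem : θ ∈ Δpos
  /-- the reflection in the highest root -/
  sθ : W
  sθ_act : ∀ β : P, σP sθ β = β - pair β (coroot θ) • θ

namespace AffineRootSetup

attribute [instance] fintypeI acgP acgQv groupW fintypeW

variable (R : AffineRootSetup)

/-- `W` acting on `Multiplicative Q∨`. -/
def phi : R.W →* MulAut (Multiplicative R.Qv) where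
  toFun w := AddEquiv.toMultiplicative (R.σQv w)
  map_one' := by ext x; rw [map_one]; rfl
  map_mul' w v := by ext x; rw [map_mul]; rfl

/-- The affine Weyl group `W_af = W ⋉ Q∨`, realized as a semidirect product. -/
abbrev Waf := Multiplicative R.Qv ⋊[R.phi] R.W

/-- the translation `t_ξ ∈ W_af` for `ξ ∈ Q∨` -/
def t (ξ : R.Qv) : R.Waf := SemidirectProduct.inl (Multiplicative.ofAdd ξ)

/-- the inclusion `W ⊆ W_af` -/
def j (w : R.W) : R.Waf := SemidirectProduct.inr w

/-- the `W`-component `w` in the normal form `x = w t_ξ` -/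
def wpart (x : R.Waf) : R.W := x.right

/-- the translation component `ξ` in the normal form `x = w t_ξ` -/
def ξpart (x : R.Waf) : R.Qv := R.σQv x.right⁻¹ (Multiplicative.toAdd x.left)

/-- The Iwahori–Matsumoto length function on the affine Weyl group:
`ℓ(w t_ξ) = ∑_{β ∈ Δ⁺} |⟨β, ξ⟩ + χ(w β ∈ Δ⁻)|`; it coincides with the Coxeter length of
`W_af` as a Coxeter group with simple reflections `s_0, s_1, …, s_n`, and restricts on `W`
to the length function of the finite Weyl group. -/
noncomputable def len (x : R.Waf) : ℕ :=
  ∑ β ∈ R.Δpos,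
    (R.pair β (R.ξpart x) + (if R.σP (R.wpart x) β ∈ R.Δpos then 0 else 1)).natAbs

/-- The semi-infinite length `ℓ∞(w t_ξ) = ℓ(w) + 2⟨ρ, ξ⟩`,
where `2⟨ρ, ξ⟩ = ∑_{β ∈ Δ⁺} ⟨β, ξ⟩`. -/
noncomputable def slen (x : R.Waf) : ℤ :=
  (R.len (R.j (R.wpart x)) : ℤ) + ∑ β ∈ R.Δpos, R.pair β (R.ξpart x)

/-- `2ρ∨`, the sum of the positive coroots. -/
def tworhov : R.Qv := ∑ β ∈ R.Δpos, R.coroot β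

/-- The set of affine simple reflections `{s_i : i ∈ I} ∪ {s_0}`,
where `s_0 = s_θ t_{−θ∨}`. -/
def Saf : Set R.Waf :=
  Set.range (fun i => R.j (R.s i)) ∪ {R.j R.sθ * R.t (-(R.coroot R.θ))}

end AffineRootSetup

/-
Along the ray `m ↦ x t_{-2mρ∨}` the length is `∑_{β>0} |c_β - m ⟨β, 2ρ∨⟩|` for constants `c_β`
depending on `x`, whereas `-ℓ∞` is affine in `m` with slope `∑_{β>0} ⟨β, 2ρ∨⟩`. The triangle
inequality bounds the length below by `m ∑_{β>0} |⟨β, 2ρ∨⟩|` minus a constant, so the two can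
agree for all large `m` only if that slope equals `∑_{β>0} |⟨β, 2ρ∨⟩| = ℓ(t_{-2ρ∨})`. The first
identity is then the affine formula for `-ℓ∞`; the second is homogeneity of `|·|`.
-/

open Filter

theorem sum_eq_sum_abs_of_sum_abs_sub_mul_eq {ι α : Type*} [Ring α] [LinearOrder α]
    [IsStrictOrderedRing α] [Archimedean α] (s : Finset ι) (c d : ι → α) (C : α) (m₀ : ℕ)
    (h : ∀ m : ℕ, m₀ ≤ m → ∑ i ∈ s, |c i - m * d i| = C + m * ∑ i ∈ s, d i) :
    ∑ i ∈ s, d i = ∑ i ∈ s, |d i| := by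
  refine le_antisymm (Finset.sum_le_sum fun i _ => le_abs_self _) (not_lt.1 fun hlt => ?_)
  have bound : ∀ m : ℕ, m₀ ≤ m →
      (m : α) * (∑ i ∈ s, |d i| - ∑ i ∈ s, d i) ≤ C + ∑ i ∈ s, |c i| := by
    intro m hm
    calc (m : α) * (∑ i ∈ s, |d i| - ∑ i ∈ s, d i)
        = ∑ i ∈ s, |(m : α) * d i| - m * ∑ i ∈ s, d i := by
          simp only [abs_mul, Nat.abs_cast, Finset.mul_sum, mul_sub]
      _ ≤ ∑ i ∈ s, (|c i - m * d i| + |c i|) - m * ∑ i ∈ s, d i := by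
          gcongr with i
          simpa [add_comm] using abs_sub (c i) (c i - m * d i)
      _ = C + ∑ i ∈ s, |c i| := by
          rw [Finset.sum_add_distrib, h m hm]; abel
  have unbounded : Tendsto (fun m : ℕ => (m : α) * (∑ i ∈ s, |d i| - ∑ i ∈ s, d i)) atTop atTop :=
    tendsto_natCast_atTop_atTop.atTop_mul_const' (sub_pos.2 hlt)
  obtain ⟨m, hlarge, hm⟩ :=
    ((unbounded.eventually_gt_atTop _).and (eventually_ge_atTop m₀)).exists
  exact (bound m hm).not_gt hlarge

namespace AffineRootSetup

variable (R : AffineRootSetup)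

noncomputable def lenTerm (x : R.Waf) (β : R.P) : ℤ :=
  R.pair β (R.ξpart x) + if R.σP (R.wpart x) β ∈ R.Δpos then 0 else 1

@[simp]
lemma wpart_mul_t (x : R.Waf) (ζ : R.Qv) : R.wpart (x * R.t ζ) = R.wpart x := by
  simp [wpart, t]

@[simp]
lemma ξpart_mul_t (x : R.Waf) (ζ : R.Qv) : R.ξpart (x * R.t ζ) = R.ξpart x + ζ := by
  have hσ : R.σQv x.right⁻¹ (R.σQv x.right ζ) = ζ := by
    rw [map_inv]; exact (Multiplicative.toAdd (R.σQv x.right)).symm_apply_apply ζ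
  simp only [ξpart, t, SemidirectProduct.mul_right, SemidirectProduct.mul_left,
    SemidirectProduct.left_inl, SemidirectProduct.right_inl, mul_one, toAdd_mul, map_add]
  exact congrArg _ hσ

@[simp]
lemma wpart_t (ζ : R.Qv) : R.wpart (R.t ζ) = 1 := rfl

@[simp]
lemma ξpart_t (ζ : R.Qv) : R.ξpart (R.t ζ) = ζ := by
  simp [ξpart, t]

lemma len_mul_t (x : R.Waf) (ζ : R.Qv) :
    R.len (x * R.t ζ) = ∑ β ∈ R.Δpos, (R.lenTerm x β + R.pair β ζ).natAbs := by
  refine Finset.sum_congr rfl fun β _ => ?_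
  simp only [lenTerm, wpart_mul_t, ξpart_mul_t, map_add, add_right_comm]

lemma slen_mul_t (x : R.Waf) (ζ : R.Qv) :
    R.slen (x * R.t ζ) = R.slen x + ∑ β ∈ R.Δpos, R.pair β ζ := by
  simp only [slen, wpart_mul_t, ξpart_mul_t, map_add, Finset.sum_add_distrib, add_assoc]

lemma len_t (ζ : R.Qv) : R.len (R.t ζ) = ∑ β ∈ R.Δpos, (R.pair β ζ).natAbs := by
  refine Finset.sum_congr rfl fun β hβ => ?_
  simp [hβ]

lemma len_t_neg (ζ : R.Qv) : R.len (R.t (-ζ)) = R.len (R.t ζ) := by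
  simp only [len_t, map_neg, Int.natAbs_neg]

lemma len_t_zsmul (k : ℤ) (ζ : R.Qv) : R.len (R.t (k • ζ)) = k.natAbs * R.len (R.t ζ) := by
  simp only [len_t, map_zsmul, smul_eq_mul, Int.natAbs_mul, Finset.mul_sum]

lemma len_mul_t_neg_zsmul (x : R.Waf) (k : ℤ) (ζ : R.Qv) :
    (R.len (x * R.t (-(k • ζ))) : ℤ) = ∑ β ∈ R.Δpos, |R.lenTerm x β - k * R.pair β ζ| := by
  simp only [len_mul_t, Nat.cast_sum, Int.natCast_natAbs, map_neg, map_zsmul, smul_eq_mul,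
    sub_eq_add_neg]

lemma slen_mul_t_neg_zsmul (x : R.Waf) (k : ℤ) (ζ : R.Qv) :
    R.slen (x * R.t (-(k • ζ))) = R.slen x - k * ∑ β ∈ R.Δpos, R.pair β ζ := by
  simp only [slen_mul_t, map_neg, map_zsmul, smul_eq_mul, Finset.sum_neg_distrib,
    Finset.mul_sum, sub_eq_add_neg]

lemma sum_pair_eq_len_t_neg_of_eventually_len_eq_neg_slen (x : R.Waf) (ζ : R.Qv) (m₀ : ℕ)
    (h : ∀ m : ℕ, m₀ ≤ m →
      (R.len (x * R.t (-((m : ℤ) • ζ))) : ℤ) = -R.slen (x * R.t (-((m : ℤ) • ζ)))) :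
    ∑ β ∈ R.Δpos, R.pair β ζ = R.len (R.t (-ζ)) := by
  have affine : ∀ m : ℕ, m₀ ≤ m → ∑ β ∈ R.Δpos, |R.lenTerm x β - m * R.pair β ζ|
      = -R.slen x + m * ∑ β ∈ R.Δpos, R.pair β ζ := by
    intro m hm
    rw [← len_mul_t_neg_zsmul, h m hm, slen_mul_t_neg_zsmul]
    ring
  rw [sum_eq_sum_abs_of_sum_abs_sub_mul_eq _ _ _ _ m₀ affine, len_t_neg, len_t]
  simp only [Nat.cast_sum, Int.natCast_natAbs]

end AffineRootSetup

/-- if `m₀ ≥ 0` is such that `ℓ(x t_{−2mρ∨}) = −ℓ∞(x t_{−2mρ∨})` for all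
`m ≥ m₀`, then for every `m ≥ 0`,
`ℓ(x t_{−2(m₀+m)ρ∨}) = ℓ(x t_{−2m₀ρ∨}) + m·ℓ(t_{−2ρ∨})` and `ℓ(t_{−2mρ∨}) = m·ℓ(t_{−2ρ∨})`. -/
theorem statement4 (R : AffineRootSetup) (x : R.Waf) (m₀ : ℕ)
    (h : ∀ m : ℕ, m₀ ≤ m →
      (R.len (x * R.t (-((m : ℤ) • R.tworhov))) : ℤ)
        = -R.slen (x * R.t (-((m : ℤ) • R.tworhov)))) :
    ∀ m : ℕ,
      R.len (x * R.t (-(((m₀ + m : ℕ) : ℤ) • R.tworhov)))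
        = R.len (x * R.t (-((m₀ : ℤ) • R.tworhov))) + m * R.len (R.t (-R.tworhov)) ∧
      R.len (R.t (-((m : ℤ) • R.tworhov))) = m * R.len (R.t (-R.tworhov)) := by
  have slope := R.sum_pair_eq_len_t_neg_of_eventually_len_eq_neg_slen x R.tworhov m₀ h
  intro m
  refine ⟨?_, ?_⟩
  · have : (R.len (x * R.t (-(((m₀ + m : ℕ) : ℤ) • R.tworhov))) : ℤ)
        = R.len (x * R.t (-((m₀ : ℤ) • R.tworhov))) + m * R.len (R.t (-R.tworhov)) := by
      rw [h (m₀ + m) (Nat.le_add_right _ _), h m₀ le_rfl, R.slen_mul_t_neg_zsmul,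
        R.slen_mul_t_neg_zsmul, slope]
      push_cast
      ring
    exact_mod_cast this
  · rw [R.len_t_neg, R.len_t_neg, R.len_t_zsmul, Int.natAbs_natCast]
end

section
/- Let D_i be the Demazure operator on ℤ[P] and T_i := D_i − 1. Then for every ν ∈ P, the operator identity T_i ∘ m_{e^ν} − m_{e^{s_iν}} ∘ T_i = m_{(e^{s_iν} − e^{ν})/(1 − e^{α_i})} holds on ℤ[P], where m_f denotes multiplication by f; in particular (e^{s_iν} − e^{ν})/(1 − e^{α_i}) lies in ℤ[P]. -/
/-- `e^μ`, the standard basis element of the group algebra `ℤ[P]` of a lattice `P`. -/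
noncomputable def e {P : Type} [AddCommGroup P] (μ : P) : AddMonoidAlgebra ℤ P :=
  AddMonoidAlgebra.single μ 1

/-!
Both sides are `ℤ`-linear in `f`, so it suffices to check the identity on monomials `e^μ`.
There, multiplying by `1 - e^α` and using the defining relation of `D` turns every term into a
difference of monomials, and additivity of `c` (`s_i(ν + μ) = s_iν + s_iμ`) makes them cancel.
The factor `1 - e^α` may be cancelled because `ℤ[P]` has no zero divisors for a free `P`
(a free abelian group has unique sums). The quotient `g` exists since `1 - e^α` divides
`e^μ - e^{μ + nα}` for every `n ∈ ℤ` (a geometric series).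
-/

instance Module.Free.uniqueSums_of_int {P : Type} [AddCommGroup P] [Module.Free ℤ P] :
    UniqueSums P :=
  let b := Module.Free.chooseBasis ℤ P
  UniqueSums.of_injective_addHom b.repr.toLinearMap.toAddMonoidHom.toAddHom
    b.repr.injective inferInstance

section Demazure

variable {P : Type} [AddCommGroup P]

lemma e_add (μ ν : P) : e (μ + ν) = e μ * e ν := by
  simp [e, AddMonoidAlgebra.single_mul_single]

lemma e_zero : e (0 : P) = 1 := rfl

lemma e_injective : Function.Injective (e : P → AddMonoidAlgebra ℤ P) :=
  fun _ _ h ↦ AddMonoidAlgebra.single_left_injective (R := ℤ) one_ne_zero h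

lemma one_sub_e_ne_zero {α : P} (hα : α ≠ 0) : 1 - e α ≠ 0 := by
  rw [sub_ne_zero, ← e_zero]
  exact e_injective.ne hα.symm

lemma one_sub_e_dvd_e_sub_e_add_zsmul (α μ : P) (n : ℤ) : 1 - e α ∣ e μ - e (μ + n • α) := by
  induction n using Int.induction_on with
  | zero => simp
  | succ n ih =>
    have : e μ - e (μ + ((n : ℤ) + 1) • α) =
        (e μ - e (μ + (n : ℤ) • α)) + e (μ + (n : ℤ) • α) * (1 - e α) := by
      rw [add_smul, one_smul, ← add_assoc, e_add (μ + _)]; ring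
    rw [this]
    exact dvd_add ih (dvd_mul_left _ _)
  | pred n ih =>
    have : e μ - e (μ + (-(n : ℤ) - 1) • α) =
        (e μ - e (μ + -(n : ℤ) • α)) - e (μ + (-(n : ℤ) - 1) • α) * (1 - e α) := by
      have hshift : μ + (-(n : ℤ) - 1) • α + α = μ + -(n : ℤ) • α := by
        rw [sub_smul, one_smul]; abel
      rw [mul_one_sub, ← e_add, hshift]; ring
    rw [this]
    exact dvd_sub ih (dvd_mul_left _ _)

variable (α : P) (c : P →+ ℤ) (D : AddMonoidAlgebra ℤ P →ₗ[ℤ] AddMonoidAlgebra ℤ P)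

-- the defining relation of `D` multiplied by the unit `-e α`
lemma one_sub_e_mul_demazure
    (hD : ∀ μ : P, (1 - e (-α)) * D (e μ) = e μ - e ((μ - c μ • α) - α)) (μ : P) :
    (1 - e α) * D (e μ) = e (μ - c μ • α) - e μ * e α := by
  have hinv : e α * e (-α) = 1 := by rw [← e_add, add_neg_cancel, e_zero]
  have hshift : e α * e (μ - c μ • α - α) = e (μ - c μ • α) := by rw [← e_add, add_sub_cancel]
  linear_combination (-e α) * hD μ - D (e μ) * hinv + hshift

lemma demazure_commutator_apply_e [NoZeroDivisors (AddMonoidAlgebra ℤ P)] (hα : α ≠ 0)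
    (hD : ∀ μ : P, (1 - e (-α)) * D (e μ) = e μ - e ((μ - c μ • α) - α))
    {ν : P} {g : AddMonoidAlgebra ℤ P} (hg : (1 - e α) * g = e (ν - c ν • α) - e ν) (μ : P) :
    (D (e ν * e μ) - e ν * e μ) - e (ν - c ν • α) * (D (e μ) - e μ) = g * e μ := by
  refine mul_left_cancel₀ (one_sub_e_ne_zero hα) ?_
  have hνμ := one_sub_e_mul_demazure α c D hD (ν + μ)
  have hs : ν + μ - c (ν + μ) • α = (ν - c ν • α) + (μ - c μ • α) := by
    rw [map_add, add_smul]; abel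
  rw [hs, e_add ν μ, e_add (ν - c ν • α)] at hνμ
  linear_combination hνμ - e (ν - c ν • α) * one_sub_e_mul_demazure α c D hD μ - e μ * hg

end Demazure

theorem statement12_general {P : Type} [AddCommGroup P] [Module.Free ℤ P]
    (α : P) (hα : α ≠ 0) (c : P →+ ℤ)
    (D : AddMonoidAlgebra ℤ P →ₗ[ℤ] AddMonoidAlgebra ℤ P)
    (hD : ∀ μ : P, (1 - e (-α)) * D (e μ) = e μ - e ((μ - c μ • α) - α)) :
    ∀ ν : P, ∃ g : AddMonoidAlgebra ℤ P,
      (1 - e α) * g = e (ν - c ν • α) - e ν ∧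
      ∀ f : AddMonoidAlgebra ℤ P,
        (D (e ν * f) - e ν * f) - e (ν - c ν • α) * (D f - f) = g * f := by
  intro ν
  obtain ⟨g, hg⟩ := one_sub_e_dvd_e_sub_e_add_zsmul α (ν - c ν • α) (c ν)
  rw [sub_add_cancel] at hg
  refine ⟨g, hg.symm, fun f ↦ ?_⟩
  have hop : (D ∘ₗ LinearMap.mulLeft ℤ (e ν) - LinearMap.mulLeft ℤ (e ν)) -
      LinearMap.mulLeft ℤ (e (ν - c ν • α)) ∘ₗ (D - LinearMap.id) = LinearMap.mulLeft ℤ g := by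
    refine AddMonoidAlgebra.lhom_ext' fun μ ↦ LinearMap.ext_ring ?_
    simpa [e] using demazure_commutator_apply_e α c D hα hD hg.symm μ
  simpa using LinearMap.congr_fun hop f

/-- with `D_i` the Demazure operator on `ℤ[P]` and `T_i := D_i − 1`, for
every `ν ∈ P` the operator identity
`T_i ∘ m_{e^ν} − m_{e^{s_iν}} ∘ T_i = m_{(e^{s_iν} − e^{ν})/(1 − e^{α_i})}` holds on `ℤ[P]`;
in particular `(e^{s_iν} − e^{ν})/(1 − e^{α_i})` lies in `ℤ[P]`. -/
theorem statement12 {P : Type} [AddCommGroup P] [Module.Free ℤ P]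
    (α : P) (hα : α ≠ 0) (c : P →+ ℤ) (hc : c α = 2)
    (D : AddMonoidAlgebra ℤ P →ₗ[ℤ] AddMonoidAlgebra ℤ P)
    (hD : ∀ μ : P, (1 - e (-α)) * D (e μ) = e μ - e ((μ - c μ • α) - α)) :
    ∀ ν : P, ∃ g : AddMonoidAlgebra ℤ P,
      (1 - e α) * g = e (ν - c ν • α) - e ν ∧
      ∀ f : AddMonoidAlgebra ℤ P,
        (D (e ν * f) - e ν * f) - e (ν - c ν • α) * (D f - f) = g * f :=
  statement12_general α hα c D hD
end
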